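/- arXiv:2212.02956 — 2 statements merged into one kernel-verified Lean document; each statement's English description precedes it below -/
import Mathlib

section
/- If L is a B-isotropic subspace of a super Hilbert space V and graph(u) ⊆ L for some everywhere-defined linear operator u : V⁺ → V⁻, then u is an isometry and L = graph(u); moreover (L + ΓL)^⊥ = ker(u*) ⊆ V⁻. -/
noncomputable section

open Submodule ContinuousLinearMap

/-- Build an element of the `L²`-product from its two components. -/
abbrev p2 {α β : Type*} [AddCommGroup α] [Module ℝ α] [AddCommGroup β] [Module ℝ β]
    (a : α) (b : β) : WithLp 2 (α × β) :=
  (WithLp.linearEquiv 2 ℝ (α × β)).symm (a, b)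

/-- The `L²`-product as a linear equiv with the plain product. -/
abbrev unL2 {α β : Type*} [AddCommGroup α] [Module ℝ α] [AddCommGroup β] [Module ℝ β] :
    WithLp 2 (α × β) →ₗ[ℝ] α × β :=
  (WithLp.linearEquiv 2 ℝ (α × β)).toLinearMap

abbrev mkL2 {α β : Type*} [AddCommGroup α] [Module ℝ α] [AddCommGroup β] [Module ℝ β] :
    (α × β) →ₗ[ℝ] WithLp 2 (α × β) :=
  ((WithLp.linearEquiv 2 ℝ (α × β)).symm : (α × β) ≃ₗ[ℝ] WithLp 2 (α × β)).toLinearMap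

section Defs

variable {Vp Vm : Type*} [NormedAddCommGroup Vp] [InnerProductSpace ℝ Vp]
  [NormedAddCommGroup Vm] [InnerProductSpace ℝ Vm]

/-- The grading operator `Γ` on the super Hilbert space `V = Vp ⊕ Vm` (`Γ = 1` on `V⁺ = Vp`,
`Γ = -1` on `V⁻ = Vm`). -/
def sGrading : WithLp 2 (Vp × Vm) →ₗ[ℝ] WithLp 2 (Vp × Vm) :=
  mkL2 ∘ₗ ((LinearMap.fst ℝ Vp Vm).prod (-(LinearMap.snd ℝ Vp Vm))) ∘ₗ unL2

/-- `L` is isotropic for the form `B(x, y) = ⟪J x, y⟫`. -/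
def IsIsotropicWith {W : Type*} [NormedAddCommGroup W] [InnerProductSpace ℝ W]
    (J : W →ₗ[ℝ] W) (L : Submodule ℝ W) : Prop :=
  ∀ x ∈ L, ∀ y ∈ L, (inner ℝ (J x) y : ℝ) = 0

/-- `L` is a Lagrangian with respect to the grading `J`, i.e. `J L = Lᗮ`. -/
def IsLagrangianWith {W : Type*} [NormedAddCommGroup W] [InnerProductSpace ℝ W]
    (J : W →ₗ[ℝ] W) (L : Submodule ℝ W) : Prop :=
  L.map J = Lᗮ

/-- `L ⊆ V = Vp ⊕ Vm` is `B`-isotropic, where `B(x,y) = ⟪Γ x, y⟫`. -/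
def IsIsotropic (L : Submodule ℝ (WithLp 2 (Vp × Vm))) : Prop :=
  IsIsotropicWith sGrading L

/-- The image `Γ L` of a subspace under the grading operator. -/
def gradingMap (L : Submodule ℝ (WithLp 2 (Vp × Vm))) : Submodule ℝ (WithLp 2 (Vp × Vm)) :=
  L.map sGrading

/-- `L` is a Lagrangian in the super Hilbert space `Vp ⊕ Vm`: `Γ L = Lᗮ`. -/
def IsLagrangian (L : Submodule ℝ (WithLp 2 (Vp × Vm))) : Prop :=
  IsLagrangianWith sGrading L

/-- The restricted graph `graph′(u) = graph(u) ∩ (ker u)ᗮ` of `u : V⁺ → V⁻`, inside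
`V = Vp ⊕ Vm`. -/
def graphPI (u : Vp →L[ℝ] Vm) : Submodule ℝ (WithLp 2 (Vp × Vm)) :=
  (LinearMap.ker (u : Vp →ₗ[ℝ] Vm))ᗮ.map (mkL2 ∘ₗ (LinearMap.id : Vp →ₗ[ℝ] Vp).prod u.toLinearMap)

/-- The full graph `graph(u) = {(x, u x)}` of `u : V⁺ → V⁻`, inside `V = Vp ⊕ Vm`. -/
def graphFull (u : Vp →ₗ[ℝ] Vm) : Submodule ℝ (WithLp 2 (Vp × Vm)) :=
  (⊤ : Submodule ℝ Vp).map (mkL2 ∘ₗ (LinearMap.id : Vp →ₗ[ℝ] Vp).prod u)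

/-- The restricted graph of an operator `w : V⁻ → V⁺`, viewed inside `V = Vp ⊕ Vm`
via `y ↦ (w y, y)`. -/
def graphPIrev (w : Vm →L[ℝ] Vp) : Submodule ℝ (WithLp 2 (Vp × Vm)) :=
  (LinearMap.ker (w : Vm →ₗ[ℝ] Vp))ᗮ.map (mkL2 ∘ₗ w.toLinearMap.prod (LinearMap.id : Vm →ₗ[ℝ] Vm))

/-- `u` is a partial isometry: it is isometric on `(ker u)ᗮ`. -/
def IsPartialIsometry (u : Vp →L[ℝ] Vm) : Prop :=
  ∀ x ∈ (LinearMap.ker (u : Vp →ₗ[ℝ] Vm))ᗮ, ‖u x‖ = ‖x‖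

/-- `u` is unitary: a surjective isometry. -/
def IsUnitaryOp {E F : Type*} [NormedAddCommGroup E] [InnerProductSpace ℝ E]
    [NormedAddCommGroup F] [InnerProductSpace ℝ F] (u : E →L[ℝ] F) : Prop :=
  (∀ x, ‖u x‖ = ‖x‖) ∧ Function.Surjective u

end Defs

section CorrDefs

variable {Ap Am Bp Bm : Type*} [NormedAddCommGroup Ap] [InnerProductSpace ℝ Ap]
  [NormedAddCommGroup Am] [InnerProductSpace ℝ Am]
  [NormedAddCommGroup Bp] [InnerProductSpace ℝ Bp]
  [NormedAddCommGroup Bm] [InnerProductSpace ℝ Bm]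

/-- The grading `Γ(x₀, x₁) = (-Γ₀ x₀, Γ₁ x₁)` on `Π V₀ ⊕ V₁`, where `V₀ = Ap ⊕ Am` and
`V₁ = Bp ⊕ Bm`. -/
def corrGrading :
    WithLp 2 (WithLp 2 (Ap × Am) × WithLp 2 (Bp × Bm)) →ₗ[ℝ]
      WithLp 2 (WithLp 2 (Ap × Am) × WithLp 2 (Bp × Bm)) :=
  mkL2 ∘ₗ ((-(sGrading : WithLp 2 (Ap × Am) →ₗ[ℝ] WithLp 2 (Ap × Am))).prodMap
    (sGrading : WithLp 2 (Bp × Bm) →ₗ[ℝ] WithLp 2 (Bp × Bm))) ∘ₗ unL2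

/-- `L` is a Lagrangian correspondence from `V₀ = Ap ⊕ Am` to `V₁ = Bp ⊕ Bm`, i.e. a
Lagrangian in `Π V₀ ⊕ V₁`. -/
def IsLagCorr (L : Submodule ℝ (WithLp 2 (WithLp 2 (Ap × Am) × WithLp 2 (Bp × Bm)))) : Prop :=
  IsLagrangianWith corrGrading L

/-- `L` is `B`-isotropic in `Π V₀ ⊕ V₁`. -/
def IsIsotropicCorr (L : Submodule ℝ (WithLp 2 (WithLp 2 (Ap × Am) × WithLp 2 (Bp × Bm)))) :
    Prop :=
  IsIsotropicWith corrGrading L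

/-- The graph of a map `u : (ΠV₀ ⊕ V₁)⁺ = V₀⁻ ⊕ V₁⁺ → V₀⁺ ⊕ V₁⁻ = (ΠV₀ ⊕ V₁)⁻`, as a linear
map into `ΠV₀ ⊕ V₁`; an element `(b, c)` is sent to `((u(b,c)₁, b), (c, u(b,c)₂))`. -/
def corrGraphMap (u : WithLp 2 (Am × Bp) →L[ℝ] WithLp 2 (Ap × Bm)) :
    WithLp 2 (Am × Bp) →ₗ[ℝ] WithLp 2 (WithLp 2 (Ap × Am) × WithLp 2 (Bp × Bm)) :=
  mkL2 ∘ₗ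
    ((mkL2 ∘ₗ (((LinearMap.fst ℝ Ap Bm) ∘ₗ unL2 ∘ₗ u.toLinearMap).prod
        ((LinearMap.fst ℝ Am Bp) ∘ₗ unL2))).prod
      (mkL2 ∘ₗ (((LinearMap.snd ℝ Am Bp) ∘ₗ unL2).prod
        ((LinearMap.snd ℝ Ap Bm) ∘ₗ unL2 ∘ₗ u.toLinearMap))))

/-- The graph of `u : (ΠV₀ ⊕ V₁)⁺ → (ΠV₀ ⊕ V₁)⁻` as a subspace of `ΠV₀ ⊕ V₁`. -/
def corrGraph (u : WithLp 2 (Am × Bp) →L[ℝ] WithLp 2 (Ap × Bm)) :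
    Submodule ℝ (WithLp 2 (WithLp 2 (Ap × Am) × WithLp 2 (Bp × Bm))) :=
  LinearMap.range (corrGraphMap u)

end CorrDefs

section Comp

variable {W0 W1 W2 : Type*} [NormedAddCommGroup W0] [InnerProductSpace ℝ W0]
  [NormedAddCommGroup W1] [InnerProductSpace ℝ W1]
  [NormedAddCommGroup W2] [InnerProductSpace ℝ W2]

/-- The composition `L₁₂ ∘ L₀₁ = {(x₀, x₂) | ∃ x₁, (x₀, x₁) ∈ L₀₁ ∧ (x₁, x₂) ∈ L₁₂}` of two
correspondences `L₀₁ ⊆ W0 ⊕ W1` and `L₁₂ ⊆ W1 ⊕ W2`. -/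
def compCorr (L01 : Submodule ℝ (WithLp 2 (W0 × W1))) (L12 : Submodule ℝ (WithLp 2 (W1 × W2))) :
    Submodule ℝ (WithLp 2 (W0 × W2)) :=
  Submodule.map
    (mkL2 ∘ₗ
      (((LinearMap.fst ℝ W0 W1 ∘ₗ unL2) ∘ₗ
          LinearMap.fst ℝ (WithLp 2 (W0 × W1)) (WithLp 2 (W1 × W2))).prod
        ((LinearMap.snd ℝ W1 W2 ∘ₗ unL2) ∘ₗ
          LinearMap.snd ℝ (WithLp 2 (W0 × W1)) (WithLp 2 (W1 × W2)))))
    ((L01.prod L12) ⊓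
      LinearMap.ker
        (((LinearMap.snd ℝ W0 W1 ∘ₗ unL2) ∘ₗ
            LinearMap.fst ℝ (WithLp 2 (W0 × W1)) (WithLp 2 (W1 × W2))) -
          ((LinearMap.fst ℝ W1 W2 ∘ₗ unL2) ∘ₗ
            LinearMap.snd ℝ (WithLp 2 (W0 × W1)) (WithLp 2 (W1 × W2)))))

end Comp

/-- `u` is a Hilbert–Schmidt operator: `∑ ‖u eᵢ‖²` converges for every Hilbert basis. -/
def IsHilbertSchmidt {E F : Type*} [NormedAddCommGroup E] [InnerProductSpace ℝ E]
    [NormedAddCommGroup F] [InnerProductSpace ℝ F] (u : E →L[ℝ] F) : Prop :=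
  ∀ (ι : Type) (b : HilbertBasis ι ℝ E), Summable fun i => ‖u (b i)‖ ^ 2

/-! Isotropy of `graph(u)` says `⟪x, y⟫ = ⟪u x, u y⟫`, so `u` is an isometry. A vector `(a, b)`
of `L` is `B`-orthogonal to itself and to `(a, u a)`, so `‖b‖² = ‖a‖² = ⟪b, u a⟫`, whence
`‖b - u a‖² = 0` and `L = graph(u)`. Finally `Γ graph(u) = graph(-u)` and
`graph(U)ᗮ = {(a, b) | a + U* b = 0}`, so `(a, b) ⊥ L + ΓL` iff `a + U* b = 0 = a - U* b`. -/

section GradedHilbert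

variable {Vp Vm : Type*} [NormedAddCommGroup Vp] [InnerProductSpace ℝ Vp]
  [NormedAddCommGroup Vm] [InnerProductSpace ℝ Vm]

theorem p2_fst_snd (z : WithLp 2 (Vp × Vm)) : p2 z.fst z.snd = z := rfl

theorem inner_p2_p2 (a c : Vp) (b d : Vm) :
    inner ℝ (p2 a b) (p2 c d) = inner ℝ a c + inner ℝ b d :=
  WithLp.prod_inner_apply _ _

theorem sGrading_p2 (a : Vp) (b : Vm) : sGrading (p2 a b) = p2 a (-b) := rfl

theorem inner_sGrading_p2_p2 (a c : Vp) (b d : Vm) :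
    inner ℝ (sGrading (p2 a b)) (p2 c d) = inner ℝ a c - inner ℝ b d := by
  rw [sGrading_p2, inner_p2_p2, inner_neg_left, sub_eq_add_neg]

theorem IsIsotropic.inner_fst_eq_inner_snd {L : Submodule ℝ (WithLp 2 (Vp × Vm))}
    (hL : IsIsotropic L) {a c : Vp} {b d : Vm} (h₁ : p2 a b ∈ L) (h₂ : p2 c d ∈ L) :
    inner ℝ a c = inner ℝ b d := by
  have := hL _ h₁ _ h₂
  rwa [inner_sGrading_p2_p2, sub_eq_zero] at this

theorem p2_mem_graphFull (u : Vp →ₗ[ℝ] Vm) (x : Vp) : p2 x (u x) ∈ graphFull u :=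
  ⟨x, trivial, rfl⟩

theorem p2_mem_graphFull_iff {u : Vp →ₗ[ℝ] Vm} {a : Vp} {b : Vm} :
    p2 a b ∈ graphFull u ↔ b = u a := by
  constructor
  · rintro ⟨x, -, hx⟩
    obtain ⟨rfl, rfl⟩ := Prod.ext_iff.mp (congrArg WithLp.ofLp hx)
    rfl
  · rintro rfl
    exact p2_mem_graphFull u a

theorem gradingMap_graphFull (u : Vp →ₗ[ℝ] Vm) : gradingMap (graphFull u) = graphFull (-u) := by
  rw [gradingMap, graphFull, graphFull, ← Submodule.map_comp]
  rfl

theorem IsIsotropic.inner_map_map {L : Submodule ℝ (WithLp 2 (Vp × Vm))} (hL : IsIsotropic L)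
    {u : Vp →ₗ[ℝ] Vm} (hu : graphFull u ≤ L) (x y : Vp) : inner ℝ (u x) (u y) = inner ℝ x y :=
  (hL.inner_fst_eq_inner_snd (hu (p2_mem_graphFull u x)) (hu (p2_mem_graphFull u y))).symm

theorem IsIsotropic.le_graphFull {L : Submodule ℝ (WithLp 2 (Vp × Vm))} (hL : IsIsotropic L)
    {u : Vp →ₗ[ℝ] Vm} (hu : graphFull u ≤ L) : L ≤ graphFull u := by
  intro z hz
  rw [← p2_fst_snd z] at hz ⊢
  set a := z.fst
  set b := z.snd
  have hua : p2 a (u a) ∈ L := hu (p2_mem_graphFull u a)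
  have hab : inner ℝ a a = inner ℝ b b := hL.inner_fst_eq_inner_snd hz hz
  have hbu : inner ℝ a a = inner ℝ b (u a) := hL.inner_fst_eq_inner_snd hz hua
  have huu : inner ℝ (u a) (u a) = inner ℝ a a := hL.inner_map_map hu a a
  rw [p2_mem_graphFull_iff, ← sub_eq_zero, ← inner_self_eq_zero (𝕜 := ℝ), inner_sub_left, inner_sub_right, inner_sub_right, real_inner_comm b (u a)]
  linarith

end GradedHilbert

section Adjoint

variable {Vp Vm : Type*} [NormedAddCommGroup Vp] [InnerProductSpace ℝ Vp] [CompleteSpace Vp]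
  [NormedAddCommGroup Vm] [InnerProductSpace ℝ Vm] [CompleteSpace Vm]

theorem p2_mem_orthogonal_graphFull_iff {U : Vp →L[ℝ] Vm} {a : Vp} {b : Vm} :
    p2 a b ∈ (graphFull (U : Vp →ₗ[ℝ] Vm))ᗮ ↔ a + adjoint U b = 0 := by
  have key : ∀ x, inner ℝ (p2 x (U x)) (p2 a b) = inner ℝ x (a + adjoint U b) := fun x => by
    rw [inner_p2_p2, inner_add_right, adjoint_inner_right]
  rw [Submodule.mem_orthogonal]
  constructor
  · intro h
    rw [← inner_self_eq_zero (𝕜 := ℝ), ← key]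
    exact h _ (p2_mem_graphFull _ _)
  · rintro h _ ⟨x, -, rfl⟩
    exact (key x).trans (by rw [h, inner_zero_right])

theorem orthogonal_graphFull_sup_gradingMap (U : Vp →L[ℝ] Vm) :
    (graphFull (U : Vp →ₗ[ℝ] Vm) ⊔ gradingMap (graphFull (U : Vp →ₗ[ℝ] Vm)))ᗮ =
      Submodule.comap (unL2 : WithLp 2 (Vp × Vm) →ₗ[ℝ] Vp × Vm)
        (Submodule.prod ⊥ (LinearMap.ker (adjoint U : Vm →ₗ[ℝ] Vp))) := by
  ext z
  rw [← p2_fst_snd z, ← Submodule.inf_orthogonal, Submodule.mem_inf, gradingMap_graphFull,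
    ← ContinuousLinearMap.toLinearMap_neg, p2_mem_orthogonal_graphFull_iff,
    p2_mem_orthogonal_graphFull_iff, map_neg, neg_apply]
  change _ ↔ z.fst = 0 ∧ adjoint U z.snd = 0
  constructor
  · rintro ⟨h₁, h₂⟩
    have ha : z.fst = 0 := by linear_combination (norm := module) (1 / 2 : ℝ) • (h₁ + h₂)
    exact ⟨ha, by rwa [ha, zero_add] at h₁⟩
  · rintro ⟨ha, hb⟩
    simp [ha, hb]

end Adjoint

/-- If `L` is `B`-isotropic and `graph(u) ⊆ L` for an everywhere-defined
linear operator `u : V⁺ → V⁻`, then `u` is an isometry, `L = graph(u)`, and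
`(L + ΓL)ᗮ = ker(u*) ⊆ V⁻`. -/
theorem isotropic_containing_graph
    {Vp Vm : Type*} [NormedAddCommGroup Vp] [InnerProductSpace ℝ Vp] [CompleteSpace Vp]
    [NormedAddCommGroup Vm] [InnerProductSpace ℝ Vm] [CompleteSpace Vm]
    (L : Submodule ℝ (WithLp 2 (Vp × Vm))) (hL : IsIsotropic L)
    (u : Vp →ₗ[ℝ] Vm) (hgraph : graphFull u ≤ L) :
    (∀ x, ‖u x‖ = ‖x‖) ∧ L = graphFull u ∧
      ∃ U : Vp →L[ℝ] Vm, (∀ x, U x = u x) ∧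
        (L ⊔ gradingMap L)ᗮ =
          Submodule.comap (unL2 : WithLp 2 (Vp × Vm) →ₗ[ℝ] Vp × Vm)
            (Submodule.prod (⊥ : Submodule ℝ Vp)
              (LinearMap.ker (ContinuousLinearMap.adjoint U : Vm →ₗ[ℝ] Vp))) := by
  let uᵢ : Vp →ₗᵢ[ℝ] Vm := u.isometryOfInner (hL.inner_map_map hgraph)
  have hL_eq : L = graphFull u := le_antisymm (hL.le_graphFull hgraph) hgraph
  refine ⟨uᵢ.norm_map, hL_eq, uᵢ.toContinuousLinearMap, fun _ => rfl, ?_⟩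
  rw [hL_eq]
  exact orthogonal_graphFull_sup_gradingMap uᵢ.toContinuousLinearMap
end
end

section
/- Let L ⊆ ΠV₀ ⊕ V₁ be a Lagrangian correspondence in general position, i.e., L ∩ (V₀ ⊕ {0}) = L ∩ ({0} ⊕ V₁) = {0}. Then L is the graph of a closed, densely defined linear operator T : V₀ → V₁ with trivial kernel and dense range. -/
noncomputable section

open Submodule ContinuousLinearMap

/-!
The grading `Γ` of `ΠV₀ ⊕ V₁` is an isometric involution, so it commutes with orthogonal
complements and `L = Γ (Γ L) = Γ Lᗮ = (Γ L)ᗮ = Lᗮᗮ` is closed. As `Γ` preserves both summands,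
`Lᗮ = Γ L` is in general position too. A vector `a ∈ V₀` orthogonal to the projection of `L` to
`V₀` gives `(a, 0) ∈ Lᗮ`, hence `a = 0`: the domain of `T` is dense, and symmetrically so is its
range. General position of `L` itself says that `L` is a graph and that `T` is injective.
-/

section InvolutiveIsometry

variable {W : Type*} [NormedAddCommGroup W] [InnerProductSpace ℝ W]

theorem IsLagrangianWith.orthogonal_orthogonal {J : W →ₗ[ℝ] W} (hJ : Function.Involutive J)
    (hJ_norm : ∀ x, ‖J x‖ = ‖x‖) {L : Submodule ℝ W} (hL : IsLagrangianWith J L) :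
    Lᗮᗮ = L := by
  let e : W ≃ₗᵢ[ℝ] W := { LinearEquiv.ofInvolutive J hJ with norm_map' := hJ_norm }
  have hJJ : J ∘ₗ J = LinearMap.id := LinearMap.ext hJ
  calc Lᗮᗮ = (L.map J)ᗮ := by rw [hL]
    _ = Lᗮ.map J := (L.map_orthogonal_equiv e).symm
    _ = (L.map J).map J := by rw [hL]
    _ = L := by rw [← Submodule.map_comp, hJJ, Submodule.map_id]

theorem IsLagrangianWith.isClosed {J : W →ₗ[ℝ] W} (hJ : Function.Involutive J)
    (hJ_norm : ∀ x, ‖J x‖ = ‖x‖) {L : Submodule ℝ W} (hL : IsLagrangianWith J L) :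
    IsClosed (L : Set W) :=
  hL.orthogonal_orthogonal hJ hJ_norm ▸ Lᗮ.isClosed_orthogonal

end InvolutiveIsometry

section Grading

variable {Vp Vm : Type*} [NormedAddCommGroup Vp] [InnerProductSpace ℝ Vp]
  [NormedAddCommGroup Vm] [InnerProductSpace ℝ Vm]

theorem sGrading_apply (x : WithLp 2 (Vp × Vm)) :
    sGrading x = WithLp.toLp 2 (x.fst, -x.snd) := rfl

theorem sGrading_involutive :
    Function.Involutive (sGrading : WithLp 2 (Vp × Vm) →ₗ[ℝ] WithLp 2 (Vp × Vm)) := by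
  intro x
  simp only [sGrading_apply, WithLp.toLp_fst, WithLp.toLp_snd, neg_neg]
  rfl

theorem norm_sGrading (x : WithLp 2 (Vp × Vm)) : ‖sGrading x‖ = ‖x‖ := by
  simp [sGrading_apply, WithLp.prod_norm_eq_of_L2]

theorem sGrading_eq_zero_iff {x : WithLp 2 (Vp × Vm)} : sGrading x = 0 ↔ x = 0 :=
  map_eq_zero_iff _ sGrading_involutive.injective

end Grading

section Correspondence

variable {A B : Type*} [NormedAddCommGroup A] [InnerProductSpace ℝ A]
  [NormedAddCommGroup B] [InnerProductSpace ℝ B]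

theorem toLp_mem_map_unL2_iff {L : Submodule ℝ (WithLp 2 (A × B))} {v : A × B} :
    v ∈ L.map unL2 ↔ WithLp.toLp 2 v ∈ L := by
  simp

theorem isClosed_map_unL2 {L : Submodule ℝ (WithLp 2 (A × B))}
    (hL : IsClosed (L : Set (WithLp 2 (A × B)))) :
    IsClosed ((L.map unL2 : Submodule ℝ (A × B)) : Set (A × B)) := by
  have hpre : ((L.map unL2 : Submodule ℝ (A × B)) : Set (A × B)) = WithLp.toLp 2 ⁻¹' L := by
    ext v
    exact toLp_mem_map_unL2_iff
  rw [hpre]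
  exact hL.preimage (WithLp.prod_continuous_toLp 2 A B)

theorem toLp_mk_zero_mem_orthogonal_iff {L : Submodule ℝ (WithLp 2 (A × B))} {a : A} :
    WithLp.toLp 2 (a, (0 : B)) ∈ Lᗮ ↔ a ∈ ((L.map unL2).map (LinearMap.fst ℝ A B))ᗮ := by
  simp only [Submodule.mem_orthogonal, ← Submodule.map_comp, Submodule.mem_map]
  constructor
  · rintro h _ ⟨p, hp, rfl⟩
    simpa [WithLp.prod_inner_apply] using h p hp
  · intro h p hp
    simpa [WithLp.prod_inner_apply] using h _ ⟨p, hp, rfl⟩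

theorem toLp_zero_mk_mem_orthogonal_iff {L : Submodule ℝ (WithLp 2 (A × B))} {b : B} :
    WithLp.toLp 2 ((0 : A), b) ∈ Lᗮ ↔ b ∈ ((L.map unL2).map (LinearMap.snd ℝ A B))ᗮ := by
  simp only [Submodule.mem_orthogonal, ← Submodule.map_comp, Submodule.mem_map]
  constructor
  · rintro h _ ⟨p, hp, rfl⟩
    simpa [WithLp.prod_inner_apply] using h p hp
  · intro h p hp
    simpa [WithLp.prod_inner_apply] using h _ ⟨p, hp, rfl⟩

theorem snd_eq_zero_of_mem_map_unL2 {L : Submodule ℝ (WithLp 2 (A × B))}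
    (hL : ∀ p ∈ L, p.fst = 0 → p = 0) {v : A × B} (hv : v ∈ L.map unL2) (hv₁ : v.1 = 0) :
    v.2 = 0 :=
  congrArg WithLp.snd (hL _ (toLp_mem_map_unL2_iff.mp hv) hv₁)

theorem fst_eq_zero_of_mem_map_unL2 {L : Submodule ℝ (WithLp 2 (A × B))}
    (hL : ∀ p ∈ L, p.snd = 0 → p = 0) {v : A × B} (hv : v ∈ L.map unL2) (hv₂ : v.2 = 0) :
    v.1 = 0 :=
  congrArg WithLp.fst (hL _ (toLp_mem_map_unL2_iff.mp hv) hv₂)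

theorem dense_map_fst_of_orthogonal {L : Submodule ℝ (WithLp 2 (A × B))} [CompleteSpace A]
    (hL : ∀ q ∈ Lᗮ, q.snd = 0 → q = 0) :
    Dense (((L.map unL2).map (LinearMap.fst ℝ A B) : Submodule ℝ A) : Set A) := by
  rw [Submodule.dense_iff_topologicalClosure_eq_top, Submodule.topologicalClosure_eq_top_iff,
    Submodule.eq_bot_iff]
  intro a ha
  exact congrArg WithLp.fst (hL _ (toLp_mk_zero_mem_orthogonal_iff.mpr ha) rfl)

theorem dense_map_snd_of_orthogonal {L : Submodule ℝ (WithLp 2 (A × B))} [CompleteSpace B]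
    (hL : ∀ q ∈ Lᗮ, q.fst = 0 → q = 0) :
    Dense (((L.map unL2).map (LinearMap.snd ℝ A B) : Submodule ℝ B) : Set B) := by
  rw [Submodule.dense_iff_topologicalClosure_eq_top, Submodule.topologicalClosure_eq_top_iff,
    Submodule.eq_bot_iff]
  intro b hb
  exact congrArg WithLp.snd (hL _ (toLp_zero_mk_mem_orthogonal_iff.mpr hb) rfl)

end Correspondence

section LagrangianCorrespondence

variable {Ap Am Bp Bm : Type*} [NormedAddCommGroup Ap] [InnerProductSpace ℝ Ap]
  [NormedAddCommGroup Am] [InnerProductSpace ℝ Am]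
  [NormedAddCommGroup Bp] [InnerProductSpace ℝ Bp]
  [NormedAddCommGroup Bm] [InnerProductSpace ℝ Bm]

theorem corrGrading_apply (x : WithLp 2 (WithLp 2 (Ap × Am) × WithLp 2 (Bp × Bm))) :
    corrGrading x = WithLp.toLp 2 (-sGrading x.fst, sGrading x.snd) := rfl

theorem corrGrading_involutive :
    Function.Involutive
      (corrGrading : WithLp 2 (WithLp 2 (Ap × Am) × WithLp 2 (Bp × Bm)) →ₗ[ℝ] _) := by
  intro x
  simp only [corrGrading_apply, WithLp.toLp_fst, WithLp.toLp_snd, map_neg, neg_neg,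
    sGrading_involutive _]
  rfl

theorem norm_corrGrading (x : WithLp 2 (WithLp 2 (Ap × Am) × WithLp 2 (Bp × Bm))) :
    ‖corrGrading x‖ = ‖x‖ := by
  rw [WithLp.prod_norm_eq_of_L2, WithLp.prod_norm_eq_of_L2 x]
  simp only [corrGrading_apply, WithLp.toLp_fst, WithLp.toLp_snd, norm_neg, norm_sGrading]

theorem IsLagCorr.isClosed
    {L : Submodule ℝ (WithLp 2 (WithLp 2 (Ap × Am) × WithLp 2 (Bp × Bm)))} (hL : IsLagCorr L) :
    IsClosed (L : Set (WithLp 2 (WithLp 2 (Ap × Am) × WithLp 2 (Bp × Bm)))) :=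
  IsLagrangianWith.isClosed corrGrading_involutive norm_corrGrading hL

theorem IsLagCorr.eq_zero_of_mem_orthogonal_of_snd_eq_zero
    {L : Submodule ℝ (WithLp 2 (WithLp 2 (Ap × Am) × WithLp 2 (Bp × Bm)))} (hL : IsLagCorr L)
    (hgen : ∀ p ∈ L, p.snd = 0 → p = 0) : ∀ q ∈ Lᗮ, q.snd = 0 → q = 0 := by
  rw [← show L.map corrGrading = Lᗮ from hL]
  rintro _ ⟨p, hp, rfl⟩ hq
  rw [hgen p hp (sGrading_eq_zero_iff.mp hq), map_zero]

theorem IsLagCorr.eq_zero_of_mem_orthogonal_of_fst_eq_zero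
    {L : Submodule ℝ (WithLp 2 (WithLp 2 (Ap × Am) × WithLp 2 (Bp × Bm)))} (hL : IsLagCorr L)
    (hgen : ∀ p ∈ L, p.fst = 0 → p = 0) : ∀ q ∈ Lᗮ, q.fst = 0 → q = 0 := by
  rw [← show L.map corrGrading = Lᗮ from hL]
  rintro _ ⟨p, hp, rfl⟩ hq
  rw [hgen p hp (sGrading_eq_zero_iff.mp (neg_eq_zero.mp hq)), map_zero]

end LagrangianCorrespondence

theorem Submodule.coe_eq_zero_of_toLinearPMap_apply_eq_zero {R E F : Type*} [Ring R]
    [AddCommGroup E] [Module R E] [AddCommGroup F] [Module R F] {g : Submodule R (E × F)}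
    (hg : ∀ x ∈ g, x.1 = 0 → x.2 = 0) (hg' : ∀ x ∈ g, x.2 = 0 → x.1 = 0)
    (x : g.toLinearPMap.domain) (hx : g.toLinearPMap x = 0) : (x : E) = 0 :=
  hg' _ (g.mem_graph_toLinearPMap hg x) hx

/-- A Lagrangian correspondence `L ⊆ ΠV₀ ⊕ V₁` in general position is the
graph of a closed, densely defined operator `T : V₀ → V₁` with trivial kernel and dense
range. -/
theorem lagCorr_general_position_is_graph
    {V0p V0m V1p V1m : Type*}
    [NormedAddCommGroup V0p] [InnerProductSpace ℝ V0p] [CompleteSpace V0p]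
    [NormedAddCommGroup V0m] [InnerProductSpace ℝ V0m] [CompleteSpace V0m]
    [NormedAddCommGroup V1p] [InnerProductSpace ℝ V1p] [CompleteSpace V1p]
    [NormedAddCommGroup V1m] [InnerProductSpace ℝ V1m] [CompleteSpace V1m]
    (L : Submodule ℝ (WithLp 2 (WithLp 2 (V0p × V0m) × WithLp 2 (V1p × V1m))))
    (hLag : IsLagCorr L)
    (hgen1 : ∀ p ∈ L, p.snd = 0 → p = 0) (hgen2 : ∀ p ∈ L, p.fst = 0 → p = 0) :
    ∃ T : WithLp 2 (V0p × V0m) →ₗ.[ℝ] WithLp 2 (V1p × V1m),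
      T.graph = L.map (unL2 : WithLp 2 (WithLp 2 (V0p × V0m) × WithLp 2 (V1p × V1m)) →ₗ[ℝ] _) ∧
      IsClosed ((T.graph : Submodule ℝ (WithLp 2 (V0p × V0m) × WithLp 2 (V1p × V1m))) :
        Set (WithLp 2 (V0p × V0m) × WithLp 2 (V1p × V1m))) ∧
      Dense (T.domain : Set (WithLp 2 (V0p × V0m))) ∧
      Dense (Set.range fun x : T.domain => T x) ∧
      (∀ x : T.domain, T x = 0 → (x : WithLp 2 (V0p × V0m)) = 0) := by
  set G := L.map unL2
  have hG : ∀ v ∈ G, v.1 = 0 → v.2 = 0 := fun _ => snd_eq_zero_of_mem_map_unL2 hgen2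
  have hG' : ∀ v ∈ G, v.2 = 0 → v.1 = 0 := fun _ => fst_eq_zero_of_mem_map_unL2 hgen1
  refine ⟨G.toLinearPMap, G.toLinearPMap_graph_eq hG, ?_, ?_, ?_,
    G.coe_eq_zero_of_toLinearPMap_apply_eq_zero hG hG'⟩
  · rw [G.toLinearPMap_graph_eq hG]
    exact isClosed_map_unL2 hLag.isClosed
  · exact dense_map_fst_of_orthogonal (hLag.eq_zero_of_mem_orthogonal_of_snd_eq_zero hgen1)
  · have hrange : (Set.range fun x : G.toLinearPMap.domain => G.toLinearPMap x) =
        G.map (LinearMap.snd ℝ _ _) := by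
      rw [← G.toLinearPMap_range hG, LinearMap.coe_range]
      rfl
    rw [hrange]
    exact dense_map_snd_of_orthogonal (hLag.eq_zero_of_mem_orthogonal_of_fst_eq_zero hgen2)
end
end
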